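/- arXiv:1802.02684 — 5 statements merged into one kernel-verified Lean document; each statement's English description precedes it below -/
import Mathlib

section
/- For all integers n and k, C(n,k) = C(n, n-k), where C is the generalized binomial coefficient extended to negative arguments. -/
/- On each of the three regions where `C` is nonzero, `k ↦ n - k` either preserves the region
and is `Nat.choose_symm`, or swaps the regions `n < 0 ≤ k` and `k ≤ n < 0`, where the two
closed forms agree by `Nat.choose_symm_add`; the zero region is preserved as well. -/

/-- Loeb's generalized binomial coefficient `C : ℤ → ℤ → ℤ`. -/
def genBinom (n k : ℤ) : ℤ :=
  if 0 ≤ k ∧ k ≤ n then (n.toNat.choose k.toNat : ℤ)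
  else if n < 0 ∧ 0 ≤ k then (-1) ^ k.toNat * ((k - n - 1).toNat.choose k.toNat : ℤ)
  else if k ≤ n ∧ n < 0 then
    (-1) ^ (n - k).toNat * ((-k - 1).toNat.choose (-n - 1).toNat : ℤ)
  else 0

theorem genBinom_natCast_of_le {n k : ℕ} (h : k ≤ n) : genBinom n k = n.choose k := by
  rw [genBinom, if_pos (by omega)]
  simp

theorem genBinom_neg_natCast (m k : ℕ) :
    genBinom (-(m + 1)) k = (-1) ^ k * ((k + m).choose k : ℤ) := by
  have hk : (k - -((m : ℤ) + 1) - 1).toNat = k + m := by omega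
  rw [genBinom, if_neg (by omega), if_pos (by omega), hk]
  simp

theorem genBinom_neg_sub_natCast (m j : ℕ) :
    genBinom (-(m + 1)) (-(m + 1) - j) = (-1) ^ j * ((m + j).choose m : ℤ) := by
  have hj : (-((m : ℤ) + 1) - (-(m + 1) - j)).toNat = j := by omega
  have hk : (-(-((m : ℤ) + 1) - j) - 1).toNat = m + j := by omega
  have hn : (-(-((m : ℤ) + 1)) - 1).toNat = m := by omega
  rw [genBinom, if_neg (by omega), if_neg (by omega), if_pos (by omega), hj, hk, hn]

theorem genBinom_eq_zero {n k : ℤ} (h : 0 ≤ n ∧ (k < 0 ∨ n < k) ∨ n < k ∧ k < 0) :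
    genBinom n k = 0 := by
  rw [genBinom, if_neg (by omega), if_neg (by omega), if_neg (by omega)]

theorem genBinom_symm_of_nonneg_of_le {n k : ℤ} (hk : 0 ≤ k) (hkn : k ≤ n) :
    genBinom n k = genBinom n (n - k) := by
  lift n to ℕ using hk.trans hkn
  lift k to ℕ using hk
  have hkn : k ≤ n := by exact_mod_cast hkn
  rw [← Nat.cast_sub hkn, genBinom_natCast_of_le hkn, genBinom_natCast_of_le (n.sub_le k),
    Nat.choose_symm hkn]

theorem genBinom_symm_of_neg_of_nonneg {n k : ℤ} (hn : n < 0) (hk : 0 ≤ k) :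
    genBinom n k = genBinom n (n - k) := by
  obtain ⟨m, rfl⟩ : ∃ m : ℕ, n = -(m + 1) := ⟨(-n - 1).toNat, by omega⟩
  lift k to ℕ using hk
  rw [genBinom_neg_natCast, genBinom_neg_sub_natCast, Nat.choose_symm_add, Nat.add_comm m k]

theorem genBinom_symm (n k : ℤ) : genBinom n k = genBinom n (n - k) := by
  by_cases h₁ : 0 ≤ k ∧ k ≤ n
  · exact genBinom_symm_of_nonneg_of_le h₁.1 h₁.2
  by_cases h₂ : n < 0 ∧ 0 ≤ k
  · exact genBinom_symm_of_neg_of_nonneg h₂.1 h₂.2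
  by_cases h₃ : k ≤ n ∧ n < 0
  · have h := genBinom_symm_of_neg_of_nonneg h₃.2 (sub_nonneg.2 h₃.1)
    rwa [sub_sub_cancel, eq_comm] at h
  rw [genBinom_eq_zero (by omega), genBinom_eq_zero (by omega)]
end

section
/- For all integers n, m, and k with k ≥ 0, the Chu–Vandermonde identity ∑_{j=0}^{k} C(n,j) · C(m,k-j) = C(n+m,k) holds for the generalized binomial coefficient C (valid including negative n and m). -/
theorem genBinom_natCast (N j : ℕ) : genBinom N j = N.choose j := by
  rw [genBinom]
  rcases le_or_gt j N with h | h
  · rw [if_pos (by omega), Int.toNat_natCast, Int.toNat_natCast]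
  · rw [if_neg (by omega), if_neg (by omega), if_neg (by omega), Nat.choose_eq_zero_of_lt h,
      Nat.cast_zero]

theorem genBinom_negSucc (N j : ℕ) :
    genBinom (Int.negSucc N) j = (-1) ^ j * (N + j).choose j := by
  have hj : (j - Int.negSucc N - 1).toNat = N + j := by omega
  rw [genBinom, if_neg (by omega), if_pos (by omega), hj, Int.toNat_natCast]

theorem genBinom_eq_ringChoose (n : ℤ) (j : ℕ) : genBinom n j = Ring.choose n j := by
  rcases n with N | N
  · rw [Int.ofNat_eq_natCast, genBinom_natCast, Ring.choose_natCast]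
  · have hN : (N : ℤ) + 1 + j - 1 = (N + j : ℕ) := by push_cast; ring
    rw [genBinom_negSucc, Int.negSucc_eq, Ring.choose_neg, hN, Ring.choose_natCast,
      Int.negOnePow_def, zpow_natCast, Units.smul_def, Units.val_pow_eq_pow_val, Units.val_neg,
      Units.val_one, smul_eq_mul]

theorem genBinom_chu_vandermonde (n m k : ℤ) (hk : 0 ≤ k) :
    ∑ j ∈ Finset.range (k.toNat + 1), genBinom n j * genBinom m (k - j) =
      genBinom (n + m) k := by
  lift k to ℕ using hk
  rw [Int.toNat_natCast, genBinom_eq_ringChoose, Ring.add_choose_eq k (Commute.all n m),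
    Finset.Nat.sum_antidiagonal_eq_sum_range_succ (fun i j => Ring.choose n i * Ring.choose m j)]
  refine Finset.sum_congr rfl fun j hj => ?_
  have hjk : j ≤ k := Nat.lt_succ_iff.mp (Finset.mem_range.mp hj)
  rw [← Nat.cast_sub hjk, genBinom_eq_ringChoose, genBinom_eq_ringChoose]
end

section
/- For all negative integers n, m, and k, one has ∑_{j=k+1}^{-1} C(n,j) · C(m,k-j) = C(n+m,k), where the sum runs over integers j with k < j < 0. (Chu–Vandermonde identity for negative upper and lower entries.) -/
open Finset

namespace Nat

theorem sum_range_succ_choose (N a : ℕ) :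
    ∑ i ∈ range (N + 1), i.choose a = (N + 1).choose (a + 1) := by
  induction N with
  | zero => cases a <;> simp [choose_eq_zero_of_lt]
  | succ N ih => rw [sum_range_succ, ih, choose_succ_succ (N + 1), add_comm]

theorem sum_range_succ_choose_mul_choose (N a b : ℕ) :
    ∑ i ∈ range (N + 1), i.choose a * (N - i).choose b = (N + 1).choose (a + b + 1) := by
  induction N generalizing b with
  | zero => cases a <;> cases b <;> simp [choose_eq_zero_of_lt]
  | succ N ih =>
    cases b with
    | zero => simpa using sum_range_succ_choose (N + 1) a
    | succ b =>
      have pascal : ∀ i ∈ range (N + 1), i.choose a * (N + 1 - i).choose (b + 1) =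
          i.choose a * (N - i).choose (b + 1) + i.choose a * (N - i).choose b := by
        intro i hi
        rw [Nat.sub_add_comm (mem_range_succ_iff.mp hi), choose_succ_succ', Nat.mul_add]
        ring
      rw [sum_range_succ, Nat.sub_self, choose_zero_succ, mul_zero, add_zero, sum_congr rfl pascal,
        sum_add_distrib, ih, ih, ← add_assoc, choose_succ_succ (N + 1), add_comm]

theorem sum_range_choose_mul_choose (K a b : ℕ) :
    ∑ i ∈ range K, i.choose a * (K - 1 - i).choose b = K.choose (a + b + 1) := by
  cases K with
  | zero => simp
  | succ N => simpa using sum_range_succ_choose_mul_choose N a b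

end Nat

theorem genBinom_neg_succ_neg_succ (a c : ℕ) :
    genBinom (-(a + 1 : ℤ)) (-(c + 1 : ℤ)) = (-1) ^ (c - a) * (c.choose a : ℤ) := by
  unfold genBinom
  rw [if_neg (by omega), if_neg (by omega)]
  by_cases hac : a ≤ c
  · rw [if_pos (by omega), show (-(a + 1 : ℤ) - -(c + 1 : ℤ)).toNat = c - a by omega,
      show (-(-(c + 1 : ℤ)) - 1).toNat = c by omega, show (-(-(a + 1 : ℤ)) - 1).toNat = a by omega]
  · rw [if_neg (by omega), Nat.choose_eq_zero_of_lt (by omega), Nat.cast_zero, mul_zero]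

theorem genBinom_neg_succ_mul_genBinom_neg_succ (a b K i : ℕ) (hi : i < K) :
    genBinom (-(a + 1 : ℤ)) (-(i + 1 : ℤ)) * genBinom (-(b + 1 : ℤ)) (-((K - 1 - i : ℕ) + 1 : ℤ)) =
      (-1) ^ (K - 1 - a - b) * ((i.choose a * (K - 1 - i).choose b : ℕ) : ℤ) := by
  rw [genBinom_neg_succ_neg_succ, genBinom_neg_succ_neg_succ, Nat.cast_mul]
  by_cases hia : a ≤ i
  · by_cases hib : b ≤ K - 1 - i
    · rw [show K - 1 - a - b = (i - a) + (K - 1 - i - b) by omega, pow_add]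
      ring
    · simp [Nat.choose_eq_zero_of_lt (not_le.mp hib)]
  · simp [Nat.choose_eq_zero_of_lt (not_le.mp hia)]

theorem genBinom_chu_vandermonde_neg (n m k : ℤ) (hn : n < 0) (hm : m < 0) (hk : k < 0) :
    ∑ i ∈ Finset.range (-k - 1).toNat,
        genBinom n (-(i + 1 : ℤ)) * genBinom m (k + (i + 1 : ℤ)) =
      genBinom (n + m) k := by
  obtain ⟨a, rfl⟩ : ∃ a : ℕ, n = -(a + 1 : ℤ) := ⟨(-n - 1).toNat, by omega⟩
  obtain ⟨b, rfl⟩ : ∃ b : ℕ, m = -(b + 1 : ℤ) := ⟨(-m - 1).toNat, by omega⟩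
  obtain ⟨K, rfl⟩ : ∃ K : ℕ, k = -(K + 1 : ℤ) := ⟨(-k - 1).toNat, by omega⟩
  have hterm : ∀ i ∈ range K, genBinom (-(a + 1 : ℤ)) (-(i + 1 : ℤ)) *
      genBinom (-(b + 1 : ℤ)) (-(K + 1 : ℤ) + (i + 1 : ℤ)) =
        (-1) ^ (K - 1 - a - b) * ((i.choose a * (K - 1 - i).choose b : ℕ) : ℤ) := by
    intro i hi
    have hi : i < K := mem_range.mp hi
    rw [show -(K + 1 : ℤ) + (i + 1 : ℤ) = -((K - 1 - i : ℕ) + 1 : ℤ) by omega]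
    exact genBinom_neg_succ_mul_genBinom_neg_succ a b K i hi
  rw [show (-(-(K + 1 : ℤ)) - 1).toNat = K by omega, sum_congr rfl hterm, ← mul_sum,
    ← Nat.cast_sum, Nat.sum_range_choose_mul_choose,
    show -(a + 1 : ℤ) + -(b + 1 : ℤ) = -((a + b + 1 : ℕ) + 1 : ℤ) by push_cast; ring,
    genBinom_neg_succ_neg_succ, show K - (a + b + 1) = K - 1 - a - b by omega]
end

section
/- For all integers n and k with k ≠ 0 such that all three coefficients are defined by the closed formulas below, one has k · C(n,k) = n · C(n-1,k-1). (The absorption/hypergeometric identity extended to all integer entries.) -/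
/-! In each of Loeb's three regions the identity becomes, once the common sign is cancelled, an
absorption identity for ordinary binomial coefficients: `(k + 1) C(n + 1, k + 1) = (n + 1) C(n, k)`
for `0 ≤ k ≤ n` and, with the roles of the two arguments exchanged, for `k ≤ n < 0`; and its
symmetric form `(k + 1) C(k + m + 1, k + 1) = (m + 1) C(k + m + 1, k)` for `n < 0 ≤ k`.
Outside the regions both sides vanish; the one exception, `C(-1, -1) = 1`, occurs at `k = 0`,
where it is multiplied by `n = 0`. -/

theorem Nat.add_one_mul_choose_add_one_eq (k m : ℕ) :
    (k + 1) * (k + m + 1).choose (k + 1) = (m + 1) * (k + m + 1).choose k := by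
  rw [mul_comm, Nat.choose_succ_right_eq, mul_comm]
  congr 2
  omega

theorem Int.natCast_add_one_sub_one (n : ℕ) : ((n + 1 : ℕ) : ℤ) - 1 = n := by
  omega

namespace genBinom

theorem natCast_natCast (n k : ℕ) : genBinom n k = n.choose k := by
  unfold genBinom
  by_cases h : k ≤ n
  · rw [if_pos (by omega)]
    simp
  · rw [if_neg (by omega), if_neg (by omega), if_neg (by omega),
      Nat.choose_eq_zero_of_lt (by omega), Nat.cast_zero]

theorem natCast_negSucc (n k : ℕ) : genBinom n (Int.negSucc k) = 0 := by
  unfold genBinom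
  split_ifs <;> omega

theorem negSucc_natCast (n k : ℕ) :
    genBinom (Int.negSucc n) k = (-1) ^ k * ((k + n).choose k : ℤ) := by
  unfold genBinom
  rw [if_neg (by omega), if_pos (by omega)]
  congr 3
  omega

theorem negSucc_negSucc (n k : ℕ) :
    genBinom (Int.negSucc n) (Int.negSucc k) = (-1) ^ (k - n) * (k.choose n : ℤ) := by
  unfold genBinom
  rw [if_neg (by omega), if_neg (by omega)]
  split_ifs with h
  · congr <;> omega
  · rw [Nat.choose_eq_zero_of_lt (by omega), Nat.cast_zero, mul_zero]

theorem neg_one_right (m : ℤ) : genBinom m (-1) = if m = -1 then 1 else 0 := by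
  unfold genBinom
  split_ifs <;> first | omega | simp_all

theorem zero_left {k : ℤ} (hk : k ≠ 0) : genBinom 0 k = 0 := by
  unfold genBinom
  split_ifs <;> omega

theorem absorption_natCast (n k : ℕ) :
    ((k + 1 : ℕ) : ℤ) * genBinom (n + 1 : ℕ) (k + 1 : ℕ) =
      ((n + 1 : ℕ) : ℤ) * genBinom n k := by
  rw [natCast_natCast, natCast_natCast, mul_comm]
  exact_mod_cast (Nat.add_one_mul_choose_eq n k).symm

theorem absorption_negSucc_natCast (n k : ℕ) :
    ((k + 1 : ℕ) : ℤ) * genBinom (Int.negSucc n) (k + 1 : ℕ) =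
      Int.negSucc n * genBinom (Int.negSucc (n + 1)) k := by
  rw [negSucc_natCast, negSucc_natCast, show k + 1 + n = k + n + 1 by omega,
    show k + (n + 1) = k + n + 1 by omega, Int.negSucc_eq, pow_succ]
  have key := Nat.add_one_mul_choose_add_one_eq k n
  zify at key
  push_cast
  linear_combination (-(-1 : ℤ) ^ k) * key

theorem absorption_negSucc_negSucc (n k : ℕ) :
    Int.negSucc k * genBinom (Int.negSucc n) (Int.negSucc k) =
      Int.negSucc n * genBinom (Int.negSucc (n + 1)) (Int.negSucc (k + 1)) := by
  rw [negSucc_negSucc, negSucc_negSucc, Nat.add_sub_add_right, Int.negSucc_eq, Int.negSucc_eq]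
  have key := Nat.add_one_mul_choose_eq k n
  zify at key
  linear_combination (-(-1 : ℤ) ^ (k - n)) * key

end genBinom

theorem genBinom_absorption_general (n k : ℤ) :
    k * genBinom n k = n * genBinom (n - 1) (k - 1) := by
  rcases eq_or_ne k 0 with rfl | hk
  · simp only [zero_mul, zero_sub, genBinom.neg_one_right]
    split_ifs <;> omega
  rcases eq_or_ne n 0 with rfl | hn
  · rw [genBinom.zero_left hk, mul_zero, zero_mul]
  obtain (_ | k) | k := k
  · exact absurd rfl hk
  · obtain (_ | n) | n := n
    · exact absurd rfl hn
    · simpa only [Int.ofNat_eq_natCast, Int.natCast_add_one_sub_one]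
        using genBinom.absorption_natCast n k
    · simpa only [Int.ofNat_eq_natCast, Int.natCast_add_one_sub_one, Int.negSucc_sub_one]
        using genBinom.absorption_negSucc_natCast n k
  · obtain (_ | n) | n := n
    · exact absurd rfl hn
    · simp only [Int.ofNat_eq_natCast, Int.natCast_add_one_sub_one, Int.negSucc_sub_one,
        genBinom.natCast_negSucc, mul_zero]
    · simpa only [Int.negSucc_sub_one] using genBinom.absorption_negSucc_negSucc n k

theorem genBinom_absorption (n k : ℤ) (hk : k ≠ 0) :
    k * genBinom n k = n * genBinom (n - 1) (k - 1) :=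
  genBinom_absorption_general n k
end

section
/- Define the generalized q-binomial coefficient as a Laurent polynomial over ℤ by: for 0 ≤ k ≤ n, the usual Gaussian binomial; for n < 0 ≤ k, qbinom(n,k) = (-1)^k · q^{k(2n-k+1)/2} · gauss(k-n-1, k); for k ≤ n < 0, qbinom(n,k) = (-1)^{n-k} · q^{(n(n+1)-k(k+1))/2} · gauss(-k-1, -n-1); otherwise 0. Then for all integers n and k with (n,k) ≠ (0,0), the q-Pascal rule holds: qbinom(n,k) = qbinom(n-1,k-1) + q^k · qbinom(n-1,k). -/
open LaurentPolynomial in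
/-- The ordinary Gaussian binomial coefficient as a (Laurent) polynomial in `q = T 1`,
defined by the `q`-Pascal rule; it is `0` when the lower entry exceeds the upper one. -/
noncomputable def gauss : ℕ → ℕ → LaurentPolynomial ℤ
  | _, 0 => 1
  | 0, _ + 1 => 0
  | a + 1, b + 1 => gauss a b + T ((b : ℤ) + 1) * gauss a (b + 1)

open LaurentPolynomial in
/-- The generalized `q`-binomial coefficient, a Laurent polynomial in `q = T 1`,
extended to arbitrary integer entries. -/
noncomputable def qbinom (n k : ℤ) : LaurentPolynomial ℤ :=
  if 0 ≤ k ∧ k ≤ n then gauss n.toNat k.toNat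
  else if n < 0 ∧ 0 ≤ k then
    (-1) ^ k.toNat * T (k * (2 * n - k + 1) / 2) * gauss (k - n - 1).toNat k.toNat
  else if k ≤ n ∧ n < 0 then
    (-1) ^ (n - k).toNat * T ((n * (n + 1) - k * (k + 1)) / 2) *
      gauss (-k - 1).toNat (-n - 1).toNat
  else 0

/-!
Inside `0 ≤ k ≤ n` the rule is the defining recurrence of `gauss`. For `n < 0` the nonzero
values are, up to a sign and a power of `q`, Gaussian binomials whose upper entry grows as `n`
decreases, and there the rule becomes the second `q`-Pascal rule
`gauss (a + 1) (b + 1) = q ^ (a - b) * gauss a b + gauss a (b + 1)`: the quadratic exponents in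
`qbinom` differ at neighbouring entries by `n`, `k` or `n - k`, which supplies the missing powers
of `q`. On the borders of the regions one term vanishes and what is left reduces to
`gauss a 0 = gauss a a = 1`.
-/

open LaurentPolynomial

theorem gauss_zero_right (a : ℕ) : gauss a 0 = 1 := by
  cases a <;> rfl

theorem gauss_succ_succ (a b : ℕ) :
    gauss (a + 1) (b + 1) = gauss a b + T ((b : ℤ) + 1) * gauss a (b + 1) := rfl

theorem gauss_eq_zero_of_lt : ∀ {a b : ℕ}, a < b → gauss a b = 0
  | 0, _ + 1, _ => rfl
  | a + 1, b + 1, h => by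
    rw [gauss_succ_succ, gauss_eq_zero_of_lt (by omega : a < b),
      gauss_eq_zero_of_lt (by omega : a < b + 1), mul_zero, add_zero]

theorem gauss_self : ∀ a : ℕ, gauss a a = 1
  | 0 => rfl
  | a + 1 => by
    rw [gauss_succ_succ, gauss_self a, gauss_eq_zero_of_lt a.lt_succ_self, mul_zero, add_zero]

theorem gauss_succ_succ' : ∀ a b : ℕ,
    gauss (a + 1) (b + 1) = T ((a : ℤ) - b) * gauss a b + gauss a (b + 1)
  | 0, 0 => by simp [gauss_succ_succ, gauss_zero_right, gauss_eq_zero_of_lt]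
  | 0, b + 1 => by simp [gauss_eq_zero_of_lt]
  | a + 1, 0 => by
    have hT : (T 1 * T a : LaurentPolynomial ℤ) = T (a + 1) := by rw [← T_add, add_comm]
    linear_combination (norm := skip) gauss_succ_succ (a + 1) 0 + T 1 * gauss_succ_succ' a 0
      - gauss_succ_succ a 0 + hT
    simp only [gauss_zero_right]
    push_cast [sub_zero]
    ring
  | a + 1, b + 1 => by
    have hT : (T (b + 1 + 1) * T (a - (b + 1)) : LaurentPolynomial ℤ) =
        T (a - b) * T (b + 1) := by
      rw [← T_add, ← T_add]; ring_nf
    linear_combination (norm := skip) gauss_succ_succ (a + 1) (b + 1) + gauss_succ_succ' a b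
      + T (b + 1 + 1) * gauss_succ_succ' a (b + 1) - T (a - b) * gauss_succ_succ a b
      - gauss_succ_succ a (b + 1) + gauss a (b + 1) * hT
    push_cast
    ring_nf

theorem qbinom_eq_zero_of_neg_of_nonneg {n k : ℤ} (hk : k < 0) (hn : 0 ≤ n) :
    qbinom n k = 0 := by
  rw [qbinom, if_neg (by omega), if_neg (by omega), if_neg (by omega)]

theorem qbinom_eq_zero_of_lt {n k : ℤ} (hnk : n < k) (h : 0 ≤ n ∨ k < 0) :
    qbinom n k = 0 := by
  rw [qbinom, if_neg (by omega), if_neg (by omega), if_neg (by omega)]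

theorem qbinom_natCast (a b : ℕ) : qbinom a b = gauss a b := by
  rcases le_or_gt b a with hba | hab
  · rw [qbinom, if_pos ⟨by positivity, by exact_mod_cast hba⟩, Int.toNat_natCast,
      Int.toNat_natCast]
  · rw [gauss_eq_zero_of_lt hab,
      qbinom_eq_zero_of_lt (by exact_mod_cast hab) (.inl (by positivity))]

-- The exponent is passed through `2 * e = …`, which avoids the integer division in `qbinom`.
theorem qbinom_negSucc_natCast (m b : ℕ) {e : ℤ} (he : 2 * e = b * (-2 * m - 1 - b)) :
    qbinom (Int.negSucc m) b = (-1) ^ b * T e * gauss (m + b) b := by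
  have h2e : (b : ℤ) * (2 * Int.negSucc m - b + 1) = 2 * e := by
    rw [he, Int.negSucc_eq]; ring
  rw [qbinom, if_neg (by omega), if_pos ⟨by omega, by positivity⟩, h2e,
    Int.mul_ediv_cancel_left _ two_ne_zero, Int.toNat_natCast,
    show (b - Int.negSucc m - 1).toNat = m + b by omega]

theorem qbinom_negSucc_negSucc (b d : ℕ) {e : ℤ}
    (he : 2 * e = b * (b + 1) - (b + d) * (b + d + 1)) :
    qbinom (Int.negSucc b) (Int.negSucc (b + d)) = (-1) ^ d * T e * gauss (b + d) b := by
  have h2e : Int.negSucc b * (Int.negSucc b + 1) - Int.negSucc (b + d) * (Int.negSucc (b + d) + 1)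
      = 2 * e := by
    rw [he, Int.negSucc_eq, Int.negSucc_eq]; push_cast; ring
  rw [qbinom, if_neg (by omega), if_neg (by omega), if_pos ⟨by omega, by omega⟩, h2e,
    Int.mul_ediv_cancel_left _ two_ne_zero,
    show (Int.negSucc b - Int.negSucc (b + d)).toNat = d by omega,
    show (-Int.negSucc (b + d) - 1).toNat = b + d by omega,
    show (-Int.negSucc b - 1).toNat = b by omega]

theorem qbinom_zero_right (n : ℤ) : qbinom n 0 = 1 := by
  rcases le_or_gt 0 n with hn | hn
  · rw [qbinom, if_pos ⟨le_rfl, hn⟩, Int.toNat_zero, gauss_zero_right]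
  · obtain ⟨m, rfl⟩ := Int.eq_negSucc_of_lt_zero hn
    rw [← Nat.cast_zero, qbinom_negSucc_natCast m 0 (e := 0) (by simp)]
    simp [gauss_zero_right]

theorem qbinom_self (n : ℤ) : qbinom n n = 1 := by
  rcases le_or_gt 0 n with hn | hn
  · obtain ⟨a, rfl⟩ := Int.eq_ofNat_of_zero_le hn
    rw [qbinom_natCast, gauss_self]
  · obtain ⟨m, rfl⟩ := Int.eq_negSucc_of_lt_zero hn
    simpa [gauss_self] using qbinom_negSucc_negSucc m 0 (e := 0) (by simp)

theorem qbinom_natCast_succ_pascal (a : ℕ) (k : ℤ) :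
    qbinom (a + 1) k = qbinom a (k - 1) + T k * qbinom a k := by
  rcases lt_trichotomy k 0 with hk | rfl | hk
  · rw [qbinom_eq_zero_of_neg_of_nonneg hk (by positivity),
      qbinom_eq_zero_of_neg_of_nonneg (by omega) (by positivity),
      qbinom_eq_zero_of_neg_of_nonneg hk (by positivity), mul_zero, add_zero]
  · rw [qbinom_zero_right, qbinom_zero_right,
      qbinom_eq_zero_of_neg_of_nonneg (by omega) (by positivity), T_zero, zero_add, mul_one]
  · obtain ⟨b, rfl⟩ := Int.eq_succ_of_zero_lt hk
    have h := gauss_succ_succ a b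
    rw [← qbinom_natCast, ← qbinom_natCast, ← qbinom_natCast] at h
    push_cast at h
    rwa [add_sub_cancel_right]

theorem qbinom_neg_one_pascal_eq_zero {k : ℤ} (hk : k ≠ 0) :
    qbinom (-1) (k - 1) + T k * qbinom (-1) k = 0 := by
  rw [show (-1 : ℤ) = Int.negSucc 0 from rfl]
  rcases hk.lt_or_gt with hk | hk
  · obtain ⟨c, rfl⟩ := Int.eq_negSucc_of_lt_zero hk
    obtain ⟨r, hr⟩ := Int.even_mul_succ_self (c : ℤ)
    have h1 := qbinom_negSucc_negSucc 0 (c + 1) (e := -r - (c + 1))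
      (by push_cast; linear_combination hr)
    have h2 := qbinom_negSucc_negSucc 0 c (e := -r) (by push_cast; linear_combination hr)
    have hT : (T (Int.negSucc c) * T (-r) : LaurentPolynomial ℤ) = T (-r - (c + 1)) := by
      rw [← T_add, Int.negSucc_eq]; ring_nf
    rw [zero_add] at h1 h2
    rw [Int.negSucc_sub_one, h1, h2, gauss_zero_right, gauss_zero_right]
    linear_combination (-1) ^ c * hT
  · obtain ⟨b, rfl⟩ := Int.eq_succ_of_zero_lt hk
    obtain ⟨r, hr⟩ := Int.even_mul_succ_self (b : ℤ)
    have h1 := qbinom_negSucc_natCast 0 b (e := -r) (by push_cast; linear_combination hr)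
    have h2 := qbinom_negSucc_natCast 0 (b + 1) (e := -r - (b + 1))
      (by push_cast; linear_combination hr)
    have hT : (T (b + 1) * T (-r - (b + 1)) : LaurentPolynomial ℤ) = T (-r) := by
      rw [← T_add]; ring_nf
    rw [Nat.cast_succ] at h2
    rw [add_sub_cancel_right, h1, h2, zero_add, zero_add, gauss_self, gauss_self]
    linear_combination -(-1) ^ b * hT

theorem qbinom_negSucc_natCast_succ_pascal (m b : ℕ) :
    qbinom (Int.negSucc m) (b + 1) =
      qbinom (Int.negSucc (m + 1)) b + T (b + 1) * qbinom (Int.negSucc (m + 1)) (b + 1) := by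
  obtain ⟨r, hr⟩ := Int.even_mul_succ_self (b : ℤ)
  set e : ℤ := -((b + 1) * (m + 1)) - r
  have h1 := qbinom_negSucc_natCast m (b + 1) (e := e) (by push_cast; linear_combination hr)
  have h2 := qbinom_negSucc_natCast (m + 1) b (e := e + (m + 1))
    (by push_cast; linear_combination hr)
  have h3 := qbinom_negSucc_natCast (m + 1) (b + 1) (e := e - (b + 1))
    (by push_cast; linear_combination hr)
  have hP := gauss_succ_succ' (m + 1 + b) b
  rw [show ((m + 1 + b : ℕ) : ℤ) - b = m + 1 by push_cast; ring] at hP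
  have hT₁ : (T (b + 1) * T (e - (b + 1)) : LaurentPolynomial ℤ) = T e := by
    rw [← T_add]; ring_nf
  have hT₂ : (T e * T (m + 1) : LaurentPolynomial ℤ) = T (e + (m + 1)) := (T_add _ _).symm
  rw [Nat.cast_succ] at h1 h3
  rw [h1, h2, h3, show m + (b + 1) = m + 1 + b by omega,
    show m + 1 + (b + 1) = m + 1 + b + 1 by omega, hP]
  linear_combination
    (-1) ^ b * (T (m + 1) * gauss (m + 1 + b) b + gauss (m + 1 + b) (b + 1)) * hT₁
    + (-1) ^ b * gauss (m + 1 + b) b * hT₂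

theorem qbinom_negSucc_negSucc_pascal (m d : ℕ) :
    qbinom (Int.negSucc m) (Int.negSucc (m + d + 1)) =
      qbinom (Int.negSucc (m + 1)) (Int.negSucc (m + d + 2)) +
        T (Int.negSucc (m + d + 1)) * qbinom (Int.negSucc (m + 1)) (Int.negSucc (m + d + 1)) := by
  obtain ⟨r, hr⟩ := Int.even_mul_succ_self (m : ℤ)
  obtain ⟨u, hu⟩ := Int.even_mul_succ_self ((m + d + 1 : ℕ) : ℤ)
  push_cast at hu
  set e : ℤ := r - u - (d + 1)
  have h1 := qbinom_negSucc_negSucc m (d + 1) (e := e + (d + 1))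
    (by push_cast; linear_combination hu - hr)
  have h2 := qbinom_negSucc_negSucc (m + 1) (d + 1) (e := e)
    (by push_cast; linear_combination hu - hr)
  have h3 := qbinom_negSucc_negSucc (m + 1) d (e := e + (d + 1) + (m + 1))
    (by push_cast; linear_combination hu - hr)
  have hP := gauss_succ_succ' (m + d + 1) m
  rw [show ((m + d + 1 : ℕ) : ℤ) - m = d + 1 by push_cast; ring] at hP
  have hT₁ : (T e * T (d + 1) : LaurentPolynomial ℤ) = T (e + (d + 1)) := (T_add _ _).symm
  have hT₂ : (T (Int.negSucc (m + d + 1)) * T (e + (d + 1) + (m + 1)) : LaurentPolynomial ℤ)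
      = T e := by
    rw [← T_add, Int.negSucc_eq]; push_cast; ring_nf
  rw [show m + (d + 1) = m + d + 1 by omega] at h1
  rw [show m + 1 + (d + 1) = m + d + 2 by omega] at h2
  rw [show m + 1 + d = m + d + 1 by omega] at h3
  rw [h1, h2, h3, show m + d + 2 = m + d + 1 + 1 by omega, hP]
  linear_combination -(-1) ^ (d + 1) * gauss (m + d + 1) m * hT₁
    + (-1) ^ (d + 1) * gauss (m + d + 1) (m + 1) * hT₂

theorem qbinom_negSucc_pascal (m : ℕ) (k : ℤ) :
    qbinom (Int.negSucc m) k =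
      qbinom (Int.negSucc m - 1) (k - 1) + T k * qbinom (Int.negSucc m - 1) k := by
  rw [Int.negSucc_sub_one]
  rcases lt_trichotomy k 0 with hk | rfl | hk
  · obtain ⟨c, rfl⟩ := Int.eq_negSucc_of_lt_zero hk
    rw [Int.negSucc_sub_one]
    rcases lt_trichotomy c m with hcm | rfl | hmc
    · rw [qbinom_eq_zero_of_lt (by omega) (.inr hk),
        qbinom_eq_zero_of_lt (by omega) (.inr (by omega)),
        qbinom_eq_zero_of_lt (by omega) (.inr hk), mul_zero, add_zero]
    · rw [qbinom_self, qbinom_self, qbinom_eq_zero_of_lt (by omega) (.inr hk), mul_zero, add_zero]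
    · obtain ⟨d, rfl⟩ := Nat.exists_eq_add_of_lt hmc
      exact qbinom_negSucc_negSucc_pascal m d
  · rw [qbinom_zero_right, qbinom_zero_right, qbinom_eq_zero_of_lt (by omega) (.inr (by omega)),
      T_zero, zero_add, one_mul]
  · obtain ⟨b, rfl⟩ := Int.eq_succ_of_zero_lt hk
    rw [add_sub_cancel_right]
    exact qbinom_negSucc_natCast_succ_pascal m b

open LaurentPolynomial in
theorem qbinom_pascal (n k : ℤ) (h : (n, k) ≠ (0, 0)) :
    qbinom n k = qbinom (n - 1) (k - 1) + T k * qbinom (n - 1) k := by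
  rcases n with (_ | a) | m
  · have hk : k ≠ 0 := by simpa using h
    have h0 : qbinom 0 k = 0 := by
      rcases hk.lt_or_gt with hk | hk
      · exact qbinom_eq_zero_of_neg_of_nonneg hk le_rfl
      · exact qbinom_eq_zero_of_lt hk (.inl le_rfl)
    simpa [h0] using (qbinom_neg_one_pascal_eq_zero hk).symm
  · simpa using qbinom_natCast_succ_pascal a k
  · exact qbinom_negSucc_pascal m k
end
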